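/- arXiv:2402.05838 — 2 statements merged into one kernel-verified Lean document; each statement's English description precedes it below -/
import Mathlib

section
/- Let k ≥ 2, let x_1, …, x_k and u be words over A. Then binom_q(x_1⋯x_k, u) = Σ q^{Σ_{i=1}^{k-1} |u_i|·(|x_{i+1}⋯x_k| − |u_{i+1}⋯u_k|)} · binom_q(x_1,u_1)⋯binom_q(x_k,u_k), where the sum ranges over all factorizations u = u_1⋯u_k with u_i ∈ A* satisfying |u_{i+1}⋯u_k| ≤ |x_{i+1}⋯x_k| for all 1 ≤ i ≤ k−1 (all other terms vanish since some binom_q(x_j,u_j) is then 0). -/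
noncomputable def qbinAux {A : Type*} [DecidableEq A] : List A → List A → Polynomial ℕ
  | _, [] => 1
  | [], _ :: _ => 0
  | a :: u, b :: v =>
      Polynomial.X ^ (v.length + 1) * qbinAux u (b :: v) +
        (if a = b then qbinAux u v else 0)

/-- The `q`-binomial coefficient `binom_q(u,v)` of two words. -/
noncomputable def qbin {A : Type*} [DecidableEq A] (u v : List A) : Polynomial ℕ :=
  qbinAux u.reverse v.reverse

/-!
Writing `x₁⋯x_k = x₁ · (x₂⋯x_k)`, it suffices to prove the two-word identity
`binom_q(xy, u) = Σ_{u = u'u''} q^{|u'|(|y| - |u''|)} binom_q(x, u') binom_q(y, u'')`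
and iterate it. The two-word identity follows by induction on `y` from the defining
recursion, which peels off the last letters. Iterating gives a sum over all factorizations
`u = u₁⋯u_k`; the length constraints only discard factorizations whose summand vanishes,
since `binom_q(x, v) = 0` whenever `|x| < |v|`.
-/

open Polynomial Finset

section

variable {A : Type*}

def vandermondeExponent (xs us : List (List A)) : ℕ :=
  ∑ i ∈ Ico 1 xs.length,
    (us.getD (i - 1) []).length * ((xs.drop i).flatten.length - (us.drop i).flatten.length)

lemma vandermondeExponent_cons (x u : List A) (xs us : List (List A)) :
    vandermondeExponent (x :: xs) (u :: us) =
      u.length * (xs.flatten.length - us.flatten.length) + vandermondeExponent xs us := by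
  cases xs with
  | nil => simp [vandermondeExponent]
  | cons x' xs =>
    rw [vandermondeExponent, List.length_cons, sum_eq_sum_Ico_succ_bot (by simp),
      ← sum_Ico_add' _ _ _ 1, vandermondeExponent]
    congr 1
    refine sum_congr rfl fun i hi => ?_
    obtain ⟨j, rfl⟩ := Nat.exists_eq_add_of_le (mem_Ico.mp hi).1
    simp [add_comm 1 j]

lemma length_flatten_le_of_forall₂ {us xs : List (List A)}
    (h : List.Forall₂ (fun u x => u.length ≤ x.length) us xs) :
    us.flatten.length ≤ xs.flatten.length := by
  induction h with
  | nil => rfl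
  | cons hux _ ih => simp only [List.flatten_cons, List.length_append]; omega

variable [DecidableEq A]

def factorizations : ℕ → List A → Finset (List (List A))
  | 0, u => if u = [] then {[]} else ∅
  | k + 1, u => (range (u.length + 1)).biUnion fun j =>
      (factorizations k (u.drop j)).image (u.take j :: ·)

lemma mem_factorizations {k : ℕ} {u : List A} {us : List (List A)} :
    us ∈ factorizations k u ↔ us.length = k ∧ us.flatten = u := by
  induction k generalizing u us with
  | zero => cases us <;> by_cases hu : u = [] <;> simp [factorizations, hu, eq_comm]
  | succ k ih =>
    cases us with
    | nil => simp [factorizations]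
    | cons w us =>
      simp only [factorizations, mem_biUnion, mem_range, mem_image, ih, List.cons.injEq,
        List.length_cons, List.flatten_cons, Nat.add_right_cancel_iff]
      constructor
      · rintro ⟨j, -, us', ⟨hlen, hflat⟩, rfl, rfl⟩
        exact ⟨hlen, by rw [hflat, List.take_append_drop]⟩
      · rintro ⟨hlen, rfl⟩
        exact ⟨w.length, by simp, us, ⟨hlen, by simp⟩, by simp, rfl⟩

lemma sum_factorizations_succ {M : Type*} [AddCommMonoid M] (k : ℕ) (u : List A)
    (f : List (List A) → M) :
    ∑ us ∈ factorizations (k + 1) u, f us =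
      ∑ j ∈ range (u.length + 1),
        ∑ us ∈ factorizations k (u.drop j), f (u.take j :: us) := by
  rw [factorizations, sum_biUnion]
  · exact sum_congr rfl fun j _ => sum_image fun _ _ _ _ h => List.tail_eq_of_cons_eq h
  · intro i hi j hj hij
    refine disjoint_left.mpr fun us hus hus' => hij ?_
    obtain ⟨_, _, rfl⟩ := mem_image.mp hus
    obtain ⟨_, _, h⟩ := mem_image.mp hus'
    simpa [min_eq_left (Nat.lt_succ_iff.mp (mem_range.mp hi)),
      min_eq_left (Nat.lt_succ_iff.mp (mem_range.mp hj))]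
      using (congrArg List.length (List.head_eq_of_cons_eq h)).symm

@[simp] lemma qbinAux_nil_right (u : List A) : qbinAux u [] = 1 := by cases u <;> rfl

@[simp] lemma qbinAux_nil_cons (b : A) (v : List A) : qbinAux [] (b :: v) = 0 := rfl

lemma qbinAux_cons_cons (a b : A) (u v : List A) :
    qbinAux (a :: u) (b :: v) =
      X ^ (v.length + 1) * qbinAux u (b :: v) + if a = b then qbinAux u v else 0 := rfl

lemma qbinAux_eq_zero_of_length_lt {u v : List A} (h : u.length < v.length) :
    qbinAux u v = 0 := by
  induction u generalizing v with
  | nil => cases v <;> simp_all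
  | cons a u ih =>
    cases v with
    | nil => simp at h
    | cons b v =>
      simp only [List.length_cons] at h
      rw [qbinAux_cons_cons, ih (by simp; omega), ih (by omega)]
      simp

lemma X_pow_mul_qbinAux_congr {b w : List A} {e e' : ℕ}
    (h : w.length ≤ b.length → e = e') : X ^ e * qbinAux b w = X ^ e' * qbinAux b w := by
  by_cases hw : w.length ≤ b.length
  · rw [h hw]
  · rw [qbinAux_eq_zero_of_length_lt (by omega), mul_zero, mul_zero]

lemma succ_add_mul_sub_succ {n m i : ℕ} (hi : i ≤ n) (hm : i + 1 ≤ m) :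
    n + 1 + (n - i) * (m - (i + 1)) = (n - i) * (m - i) + (i + 1) := by
  obtain ⟨t, rfl⟩ := Nat.exists_eq_add_of_le hi
  obtain ⟨s, rfl⟩ := Nat.exists_eq_add_of_le hm
  simp only [Nat.add_sub_cancel_left, show i + 1 + s - i = s + 1 by omega]
  ring

/-- The two-word identity in reversed form: `b ++ a` is the reversal of `a.reverse ++ b.reverse`. -/
lemma qbinAux_append (a b v : List A) :
    qbinAux (b ++ a) v = ∑ j ∈ range (v.length + 1),
      X ^ ((v.length - j) * (b.length - j)) * qbinAux b (v.take j) * qbinAux a (v.drop j) := by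
  induction b generalizing v with
  | nil => cases v <;> simp [sum_range_succ']
  | cons c b ih =>
    cases v with
    | nil => simp
    | cons d v =>
      have hshift : X ^ (v.length + 1) * qbinAux (b ++ a) (d :: v) =
          X ^ ((v.length + 1) * (b.length + 1)) * qbinAux a (d :: v) +
            ∑ i ∈ range (v.length + 1), X ^ ((v.length - i) * (b.length - i) + (i + 1)) *
              qbinAux b (d :: v.take i) * qbinAux a (v.drop i) := by
        rw [ih, List.length_cons, sum_range_succ', mul_add, mul_sum, add_comm]
        congr 1
        · simp only [Nat.sub_zero, List.take_zero, List.drop_zero, qbinAux_nil_right, mul_one,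
            ← mul_assoc, ← pow_add]
          ring
        · refine sum_congr rfl fun i hi => ?_
          have hi : i ≤ v.length := by simp at hi; omega
          simp only [List.take_succ_cons, List.drop_succ_cons, Nat.add_sub_add_right,
            ← mul_assoc, ← pow_add]
          congr 1
          refine X_pow_mul_qbinAux_congr fun hm => ?_
          simp only [List.length_cons, List.length_take, min_eq_left hi] at hm
          exact succ_add_mul_sub_succ hi hm
      have hterm : ∀ i ∈ range (v.length + 1),
          X ^ ((v.length - i) * (b.length - i)) * qbinAux (c :: b) (d :: v.take i) *
              qbinAux a (v.drop i) =
            X ^ ((v.length - i) * (b.length - i) + (i + 1)) * qbinAux b (d :: v.take i) *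
                qbinAux a (v.drop i) +
              if c = d then
                X ^ ((v.length - i) * (b.length - i)) * qbinAux b (v.take i) * qbinAux a (v.drop i)
              else 0 := by
        intro i hi
        have hi : i ≤ v.length := by simp at hi; omega
        rw [qbinAux_cons_cons, List.length_take, min_eq_left hi]
        split_ifs <;> ring
      rw [List.cons_append, qbinAux_cons_cons, hshift, ih v, List.length_cons,
        sum_range_succ' _ (v.length + 1)]
      simp only [List.take_succ_cons, List.drop_succ_cons, Nat.add_sub_add_right,
        List.length_cons, Nat.sub_zero, List.take_zero, List.drop_zero, qbinAux_nil_right, mul_one]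
      rw [sum_congr rfl hterm, sum_add_distrib]
      split_ifs
      · abel
      · simp only [sum_const_zero, add_zero]
        abel

lemma qbin_eq_zero_of_length_lt {x u : List A} (h : x.length < u.length) : qbin x u = 0 :=
  qbinAux_eq_zero_of_length_lt (by simpa using h)

lemma length_le_of_qbin_ne_zero {x u : List A} (h : qbin x u ≠ 0) : u.length ≤ x.length :=
  not_lt.mp (mt qbin_eq_zero_of_length_lt h)

lemma qbin_append (x y u : List A) :
    qbin (x ++ y) u = ∑ i ∈ range (u.length + 1),
      X ^ (i * (y.length - (u.length - i))) * qbin x (u.take i) * qbin y (u.drop i) := by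
  rw [qbin, List.reverse_append, qbinAux_append, List.length_reverse, ← sum_range_reflect]
  refine sum_congr rfl fun i hi => ?_
  have hi : i ≤ u.length := by simp at hi; omega
  rw [Nat.add_sub_cancel, Nat.sub_sub_self hi, qbin, qbin, List.reverse_take, List.reverse_drop,
    List.length_reverse, mul_right_comm _ (qbinAux _ _)]

theorem qbin_flatten (xs : List (List A)) (u : List A) :
    qbin xs.flatten u = ∑ us ∈ factorizations xs.length u,
      X ^ vandermondeExponent xs us *
        ∏ i ∈ range xs.length, qbin (xs.getD i []) (us.getD i []) := by
  induction xs generalizing u with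
  | nil =>
    cases u with
    | nil => simp [factorizations, vandermondeExponent, qbin]
    | cons a u => simp [factorizations, qbin_eq_zero_of_length_lt]
  | cons x xs ih =>
    rw [List.flatten_cons, qbin_append, List.length_cons, sum_factorizations_succ]
    refine sum_congr rfl fun j hj => ?_
    have hj : j ≤ u.length := by simp at hj; omega
    rw [ih, mul_sum]
    refine sum_congr rfl fun us hus => ?_
    obtain ⟨-, hflat⟩ := mem_factorizations.mp hus
    rw [vandermondeExponent_cons, prod_range_succ', hflat, List.length_take, min_eq_left hj,
      List.length_drop, pow_add]
    simp only [List.getD_cons_succ, List.getD_cons_zero]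
    ring

lemma length_flatten_drop_le_of_prod_qbin_ne_zero {xs us : List (List A)}
    (hlen : us.length = xs.length)
    (h : ∏ i ∈ range xs.length, qbin (xs.getD i []) (us.getD i []) ≠ 0) (i : ℕ) :
    (us.drop i).flatten.length ≤ (xs.drop i).flatten.length := by
  refine length_flatten_le_of_forall₂
    (List.forall₂_drop i (List.forall₂_iff_get.mpr ⟨hlen, fun j hu hx => ?_⟩))
  have := length_le_of_qbin_ne_zero (prod_ne_zero_iff.mp h j (mem_range.mpr hx))
  simpa [List.getD_eq_getElem, hu, hx] using this

end

theorem qbin_vandermonde_general_general (A : Type*) [DecidableEq A]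
    (k : ℕ) (xs : List (List A)) (hxs : xs.length = k) (u : List A) :
    qbin xs.flatten u =
      ∑ᶠ us ∈ {us : List (List A) | us.length = k ∧ us.flatten = u ∧
          ∀ i ∈ Finset.Ico 1 k, ((us.drop i).flatten).length ≤ ((xs.drop i).flatten).length},
        (Polynomial.X : Polynomial ℕ) ^
            (∑ i ∈ Finset.Ico 1 k,
              (us.getD (i - 1) []).length *
                (((xs.drop i).flatten).length - ((us.drop i).flatten).length)) *
          ∏ i ∈ Finset.range k, qbin (xs.getD i []) (us.getD i []) := by
  subst hxs
  rw [qbin_flatten, ← finsum_mem_coe_finset]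
  refine finsum_mem_inter_support_eq' _ _ _ fun us hus => ?_
  have hprod := right_ne_zero_of_mul (Function.mem_support.mp hus)
  simp only [mem_coe, mem_factorizations, Set.mem_ofPred_eq]
  exact ⟨fun ⟨hlen, hflat⟩ => ⟨hlen, hflat, fun i _ =>
    length_flatten_drop_le_of_prod_qbin_ne_zero hlen hprod i⟩, fun h => ⟨h.1, h.2.1⟩⟩

/-- The generalized `q`-Vandermonde identity: for `k ≥ 2` and words
`x₁, …, x_k` (given as a list `xs` of length `k`) and `u`,
`binom_q(x₁⋯x_k, u)` equals the sum, over all factorizations `u = u₁⋯u_k`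
(given as lists `us` of length `k` with `us.flatten = u`) satisfying
`|u_{i+1}⋯u_k| ≤ |x_{i+1}⋯x_k|` for `1 ≤ i ≤ k-1`, of
`q^{Σ_{i=1}^{k-1} |u_i|(|x_{i+1}⋯x_k| - |u_{i+1}⋯u_k|)} ∏_{i=1}^{k} binom_q(x_i,u_i)`. -/
theorem qbin_vandermonde_general (A : Type*) [Fintype A] [DecidableEq A]
    (k : ℕ) (hk : 2 ≤ k) (xs : List (List A)) (hxs : xs.length = k) (u : List A) :
    qbin xs.flatten u =
      ∑ᶠ us ∈ {us : List (List A) | us.length = k ∧ us.flatten = u ∧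
          ∀ i ∈ Finset.Ico 1 k, ((us.drop i).flatten).length ≤ ((xs.drop i).flatten).length},
        (Polynomial.X : Polynomial ℕ) ^
            (∑ i ∈ Finset.Ico 1 k,
              (us.getD (i - 1) []).length *
                (((xs.drop i).flatten).length - ((us.drop i).flatten).length)) *
          ∏ i ∈ Finset.range k, qbin (xs.getD i []) (us.getD i []) :=
  qbin_vandermonde_general_general A k xs hxs u
end

section
/- Let p be a prime, A a finite alphabet, v ∈ A* a word, d ≥ 1 an integer, a ∈ F_p nonzero, M = a·(q−1)^d ∈ F_p[q], and R ∈ F_p[q] a polynomial of degree less than d. Then the language L = { u ∈ A* : binom_q(u,v) ≡ R (mod M) }, where binom_q(u,v) is reduced coefficientwise modulo p to an element of F_p[q], is a p-group language: there exist a finite group G whose order is a power of p, a monoid morphism μ : A* → G, and a subset S ⊆ G such that L = μ⁻¹(S). -/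
/-!
Work in `K = 𝔽_p[q]/((q-1)^d)`. Appending a letter `c` to `u` acts on the vector
`(binom_q(u, v_{<j}))_{0 ≤ j ≤ |v|}` of q-binomials against the prefixes of `v` by right
multiplication with an upper triangular matrix with diagonal `q^j ≡ 1 mod (q-1)`. For such a
matrix `M`, `M - 1` is nilpotent, and `p = 0` in `K`, so `M ^ p^N = 1`: these matrices form a
finite `p`-group, and the language is the preimage of "the last coordinate is `R mod (q-1)^d`".
-/

open Polynomial Matrix

section Unitriangular

theorem one_add_pow_prime_pow_eq_one {R : Type*} [Ring R] {p : ℕ} (hp : p.Prime)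
    (hpR : (p : R) = 0) {N : R} {k : ℕ} (hN : N ^ k = 0) : (1 + N) ^ p ^ k = 1 := by
  obtain ⟨r, hr⟩ := (Commute.one_left N).exists_add_pow_prime_pow_eq hp k
  rw [hr, pow_eq_zero_of_le (Nat.lt_pow_self hp.one_lt).le hN, hpR]
  simp

variable {R : Type*} [CommRing R]

theorem Matrix.BlockTriangular.mul_apply_self {ι : Type*} [Fintype ι] [LinearOrder ι]
    {M N : Matrix ι ι R} (hM : M.BlockTriangular id) (hN : N.BlockTriangular id) (i : ι) :
    (M * N) i i = M i i * N i i := by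
  rw [mul_apply, Finset.sum_eq_single i]
  · intro k _ hki
    rcases hki.lt_or_gt with h | h
    · rw [hM h, zero_mul]
    · rw [hN h, mul_zero]
  · simp

def unitriangularMod (m : ℕ) (t : R) : Submonoid (Matrix (Fin m) (Fin m) R) where
  carrier := {M | M.BlockTriangular id ∧ ∀ i, t ∣ M i i - 1}
  one_mem' := ⟨blockTriangular_one, by simp⟩
  mul_mem' := by
    rintro M N ⟨hM, hMd⟩ ⟨hN, hNd⟩
    refine ⟨hM.mul hN, fun i => ?_⟩
    rw [hM.mul_apply_self hN, show M i i * N i i - 1 = M i i * (N i i - 1) + (M i i - 1) by ring]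
    exact dvd_add ((hNd i).mul_left _) (hMd i)

theorem Matrix.pow_dvd_pow_apply {ι : Type*} [Fintype ι] [DecidableEq ι] {t : R}
    {M : Matrix ι ι R} (h : ∀ i j, t ∣ M i j) (s : ℕ) (i j : ι) : t ^ s ∣ (M ^ s) i j := by
  induction s generalizing j with
  | zero => simp
  | succ s ih =>
    rw [pow_succ, pow_succ, mul_apply]
    exact Finset.dvd_sum fun l _ => mul_dvd_mul (ih l) (h l j)

variable {m : ℕ} {t : R} {M : Matrix (Fin m) (Fin m) R}

theorem Matrix.BlockTriangular.dvd_pow_apply (hM : M.BlockTriangular id)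
    (hdiag : ∀ i, t ∣ M i i) (k : ℕ) (i j : Fin m) (hij : (j : ℕ) < i + k) :
    t ∣ (M ^ k) i j := by
  induction k generalizing i with
  | zero => rw [pow_zero, one_apply_ne (by omega)]; exact dvd_zero t
  | succ k ih =>
    rw [pow_succ', mul_apply]
    refine Finset.dvd_sum fun l _ => ?_
    rcases lt_trichotomy l i with hl | rfl | hl
    · rw [hM hl, zero_mul]; exact dvd_zero t
    · exact (hdiag l).mul_right _
    · exact (ih l (by omega)).mul_left _

theorem Matrix.BlockTriangular.pow_eq_zero_of_dvd_diag {d : ℕ} (ht : t ^ d = 0)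
    (hM : M.BlockTriangular id) (hdiag : ∀ i, t ∣ M i i) : M ^ (m * d) = 0 := by
  ext i j
  have := pow_dvd_pow_apply (fun i j => hM.dvd_pow_apply hdiag m i j (by omega)) d i j
  rwa [← pow_mul, ht, zero_dvd_iff] at this

theorem pow_eq_one_of_mem_unitriangularMod {p d : ℕ} (hp : p.Prime) (hpR : (p : R) = 0)
    (ht : t ^ d = 0) (hM : M ∈ unitriangularMod m t) : M ^ p ^ (m * d) = 1 := by
  have hpM : (p : Matrix (Fin m) (Fin m) R) = 0 := by
    rw [← map_natCast (scalar (Fin m)), hpR, map_zero]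
  have hN : (M - 1) ^ (m * d) = 0 :=
    (hM.1.sub blockTriangular_one).pow_eq_zero_of_dvd_diag ht fun i => by simpa using hM.2 i
  simpa using one_add_pow_prime_pow_eq_one hp hpM hN

theorem isPGroup_units_unitriangularMod {p d : ℕ} (hp : p.Prime) (hpR : (p : R) = 0)
    (ht : t ^ d = 0) : IsPGroup p (unitriangularMod m t)ˣ := fun g =>
  ⟨m * d, Units.ext <| Subtype.ext <| by
    simpa using pow_eq_one_of_mem_unitriangularMod hp hpR ht (g : unitriangularMod m t).2⟩

end Unitriangular

section QBinomial

variable {A : Type*} [DecidableEq A]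

@[simp]
theorem qbin_nil_right (u : List A) : qbin u [] = 1 := by
  unfold qbin
  cases u.reverse <;> rfl

theorem qbin_append_singleton (u w : List A) (c b : A) :
    qbin (u ++ [c]) (w ++ [b]) =
      X ^ (w.length + 1) * qbin u (w ++ [b]) + if c = b then qbin u w else 0 := by
  simp only [qbin, List.reverse_append, List.reverse_singleton, List.singleton_append,
    qbinAux, List.length_reverse]

variable {K : Type*} [CommRing K]

def qbinTransferMatrix (q : K) (v : List A) (c : A) :
    Matrix (Fin (v.length + 1)) (Fin (v.length + 1)) K :=
  diagonal (fun j : Fin (v.length + 1) => q ^ (j : ℕ)) +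
    of fun k j : Fin (v.length + 1) => if (j : ℕ) = k + 1 ∧ v[(k : ℕ)]? = some c then 1 else 0

noncomputable def qbinPrefixVec (q : K) (v u : List A) : Fin (v.length + 1) → K :=
  fun j => aeval q (qbin u (v.take j))

variable (q : K) (v : List A) (c : A) (W : Fin (v.length + 1) → K)

theorem vecMul_qbinTransferMatrix_zero : (W ᵥ* qbinTransferMatrix q v c) 0 = W 0 := by
  simp only [qbinTransferMatrix, vecMul_add, Pi.add_apply, vecMul_diagonal]
  simp [vecMul, dotProduct]

theorem vecMul_qbinTransferMatrix_succ (j : Fin v.length) :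
    (W ᵥ* qbinTransferMatrix q v c) j.succ =
      W j.succ * q ^ ((j : ℕ) + 1) + if c = v[j] then W j.castSucc else 0 := by
  simp only [qbinTransferMatrix, vecMul_add, Pi.add_apply, vecMul_diagonal, Fin.val_succ]
  congr 1
  rw [vecMul, dotProduct, Finset.sum_eq_single j.castSucc]
  · simp [eq_comm]
  · intro k _ hk
    have hjk : (j : ℕ) ≠ k := fun h => hk (Fin.ext (by simpa using h.symm))
    simp [hjk]
  · simp

end QBinomial

section QBinomialRepresentation

variable {A : Type*} [DecidableEq A] {K : Type*} [CommRing K] (q : K) (v : List A)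

theorem qbinPrefixVec_append_singleton (u : List A) (c : A) :
    qbinPrefixVec q v (u ++ [c]) = qbinPrefixVec q v u ᵥ* qbinTransferMatrix q v c := by
  funext j
  induction j using Fin.cases with
  | zero => simp [vecMul_qbinTransferMatrix_zero, qbinPrefixVec]
  | succ j =>
    have htake : v.take (j + 1) = v.take j ++ [v[j]] := by
      rw [List.take_add_one, List.getElem?_eq_getElem j.isLt, Option.toList_some]
      rfl
    have hlen : (v.take j).length = j := by simp [j.isLt.le]
    rw [vecMul_qbinTransferMatrix_succ]
    simp only [qbinPrefixVec, Fin.val_succ, Fin.val_castSucc, htake, qbin_append_singleton, hlen]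
    split_ifs <;> simp [mul_comm]

theorem qbinTransferMatrix_mem_unitriangularMod (c : A) :
    qbinTransferMatrix q v c ∈ unitriangularMod (v.length + 1) (q - 1) := by
  refine ⟨fun i j hij => ?_, fun i => ?_⟩
  · have hji : (j : ℕ) < i := hij
    have hne : i ≠ j := fun h => by subst h; omega
    simp [qbinTransferMatrix, hne, show (j : ℕ) ≠ i + 1 by omega]
  · simpa [qbinTransferMatrix] using sub_one_dvd_pow_sub_one q i

theorem exists_monoidHom_qbinPrefixVec {p d : ℕ} (hp : p.Prime) (hpK : (p : K) = 0)
    (hq : (q - 1) ^ d = 0) :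
    ∃ μ : FreeMonoid A →* (unitriangularMod (v.length + 1) (q - 1))ˣ, ∀ u w,
      qbinPrefixVec q v (u ++ w.toList) = qbinPrefixVec q v u ᵥ* (μ w : Matrix _ _ K) := by
  let T (c : A) : unitriangularMod (v.length + 1) (q - 1) :=
    ⟨_, qbinTransferMatrix_mem_unitriangularMod q v c⟩
  have hT (c : A) : T c ^ p ^ ((v.length + 1) * d) = 1 :=
    Subtype.ext (by simpa using pow_eq_one_of_mem_unitriangularMod hp hpK hq (T c).2)
  refine ⟨FreeMonoid.lift fun c => Units.ofPowEqOne _ _ (hT c) (pow_ne_zero _ hp.ne_zero),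
    fun u w => ?_⟩
  induction w using FreeMonoid.inductionOn generalizing u with
  | one => simp
  | of c => simpa using qbinPrefixVec_append_singleton q v u c
  | mul x y hx hy => simp [← List.append_assoc, hx, hy, vecMul_vecMul]

end QBinomialRepresentation

theorem qbinPrefixVec_last {A : Type*} [DecidableEq A] {K : Type*} [CommRing K] (q : K)
    (u v : List A) : qbinPrefixVec q v u (Fin.last _) = aeval q (qbin u v) := by
  simp [qbinPrefixVec]

theorem C_mul_dvd_map_sub_iff_aeval_root_eq {F : Type*} [CommRing F] (f : F[X]) {a : F}
    (ha : IsUnit a) (P : ℕ[X]) (R : F[X]) :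
    C a * f ∣ P.map (Nat.castRingHom F) - R ↔ aeval (AdjoinRoot.root f) P = AdjoinRoot.mk f R := by
  rw [(isUnit_C.mpr ha).mul_left_dvd, ← AdjoinRoot.mk_eq_zero, map_sub, sub_eq_zero,
    ← AdjoinRoot.aeval_eq, ← aeval_map_algebraMap F _ P,
    Subsingleton.elim (algebraMap ℕ F) (Nat.castRingHom F)]

theorem qbin_language_is_p_group_language_general (p : ℕ) [Fact p.Prime]
    (A : Type) [DecidableEq A] (v : List A)
    (d : ℕ) (a : ZMod p) (ha : a ≠ 0)
    (R : Polynomial (ZMod p)) :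
    ∃ (G : Type) (_ : Group G) (_ : Fintype G) (t : ℕ),
      Fintype.card G = p ^ t ∧
      ∃ (μ : FreeMonoid A →* G) (S : Set G),
        {w : FreeMonoid A |
          (Polynomial.C a * (Polynomial.X - 1) ^ d) ∣
            ((qbin (FreeMonoid.toList w) v).map (Nat.castRingHom (ZMod p)) - R)} =
          μ ⁻¹' S := by
  set f : (ZMod p)[X] := (X - 1) ^ d
  set q := AdjoinRoot.root f
  have hp : p.Prime := Fact.out
  have hpK : (p : AdjoinRoot f) = 0 := by
    rw [← map_natCast (algebraMap (ZMod p) _), ZMod.natCast_self, map_zero]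
  have hq : (q - 1) ^ d = 0 := by
    have := AdjoinRoot.mk_self (f := f)
    rwa [map_pow, map_sub, AdjoinRoot.mk_X, map_one] at this
  have : Module.Finite (ZMod p) (AdjoinRoot f) :=
    Monic.finite_adjoinRoot (by simpa using (monic_X_sub_C (1 : ZMod p)).pow d)
  have : Finite (AdjoinRoot f) := Module.finite_of_finite (ZMod p)
  have : Fintype (unitriangularMod (v.length + 1) (q - 1))ˣ := Fintype.ofFinite _
  obtain ⟨t, hcard⟩ := IsPGroup.iff_card.mp (isPGroup_units_unitriangularMod hp hpK hq)
  obtain ⟨μ, hμ⟩ := exists_monoidHom_qbinPrefixVec q v hp hpK hq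
  refine ⟨_, inferInstance, inferInstance, t, by rwa [← Nat.card_eq_fintype_card], μ,
    {g | (qbinPrefixVec q v [] ᵥ* (g : Matrix _ _ (AdjoinRoot f))) (Fin.last v.length) =
      AdjoinRoot.mk f R}, ?_⟩
  ext w
  rw [Set.mem_preimage, Set.mem_ofPred_eq, Set.mem_ofPred_eq, ← hμ, List.nil_append,
    qbinPrefixVec_last]
  exact C_mul_dvd_map_sub_iff_aeval_root_eq f (Ne.isUnit ha) _ R

/-- For `M = a·(q-1)^d` with `a ≠ 0`, `d ≥ 1`, and `R` of degree `< d`, the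
language `{u ∈ A* : binom_q(u,v) ≡ R (mod M)}` (the `q`-binomial being reduced
coefficientwise mod `p`) is a `p`-group language: it is the preimage of a set
under a monoid morphism from `A*` to a finite group of order a power of `p`. -/
theorem qbin_language_is_p_group_language (p : ℕ) [Fact p.Prime]
    (A : Type) [Fintype A] [DecidableEq A] (v : List A)
    (d : ℕ) (hd : 1 ≤ d) (a : ZMod p) (ha : a ≠ 0)
    (R : Polynomial (ZMod p)) (hR : R.degree < (d : ℕ)) :
    ∃ (G : Type) (_ : Group G) (_ : Fintype G) (t : ℕ),
      Fintype.card G = p ^ t ∧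
      ∃ (μ : FreeMonoid A →* G) (S : Set G),
        {w : FreeMonoid A |
          (Polynomial.C a * (Polynomial.X - 1) ^ d) ∣
            ((qbin (FreeMonoid.toList w) v).map (Nat.castRingHom (ZMod p)) - R)} =
          μ ⁻¹' S :=
  qbin_language_is_p_group_language_general p A v d a ha R
end
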